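/- Let 0 ≤ β < 1, α, λ > 0 with α + λ = 1. Then ρ(π) = -1 and ρ(-π) = -1, and |ρ(θ)| < 1 for all θ ∈ (-π, π) \ {0}. -/

import Mathlib

/-! With `α + λ = 1` the numerator of `ρ` is `α e^{-iθ} + λ e^{iθ} - β`, and expanding in
`cos θ`, `sin θ` gives `|1 - β e^{-iθ}|² - |α e^{-iθ} + λ e^{iθ} - β|² = 4αλ sin²θ`, which is
positive as soon as `sin θ ≠ 0`. At `θ = ±π` both `e^{±iθ}` equal `-1`, and `ρ = -(1 + β) / (1 + β)`. -/

open Real Complex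

noncomputable def ampFactor (α β lam : ℝ) (θ : ℝ) : ℂ :=
  ((α : ℂ) * (Complex.exp (-(Complex.I * θ)) - 1) + 1 - (β : ℂ)
      + (lam : ℂ) * (Complex.exp (Complex.I * θ) - 1)) /
    (1 - (β : ℂ) * Complex.exp (-(Complex.I * θ)))

section

variable {α β lam : ℝ}

lemma Complex.exp_I_mul_ofReal (θ : ℝ) :
    Complex.exp (I * θ) = Real.cos θ + Real.sin θ * I := by
  rw [mul_comm, exp_mul_I, ← ofReal_cos, ← ofReal_sin]

lemma Complex.exp_neg_I_mul_ofReal (θ : ℝ) :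
    Complex.exp (-(I * θ)) = Real.cos θ - Real.sin θ * I := by
  rw [← mul_neg, ← ofReal_neg, exp_I_mul_ofReal, Real.cos_neg, Real.sin_neg, ofReal_neg,
    neg_mul, sub_eq_add_neg]

lemma ampFactor_of_exp_eq_neg_one (hsum : α + lam = 1) (hβ : 1 + β ≠ 0) {θ : ℝ}
    (hθ : Complex.exp (I * θ) = -1) : ampFactor α β lam θ = -1 := by
  have hθ' : Complex.exp (-(I * θ)) = -1 := by rw [Complex.exp_neg, hθ, inv_neg, inv_one]
  have hsumC : (α : ℂ) + lam = 1 := by exact_mod_cast hsum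
  have hden : (1 : ℂ) - β * -1 ≠ 0 := by
    rw [mul_neg_one, sub_neg_eq_add]
    exact_mod_cast hβ
  rw [ampFactor, hθ, hθ', div_eq_iff hden]
  linear_combination (-2 : ℂ) * hsumC

lemma ampFactor_numerator_eq (hsum : α + lam = 1) (θ : ℝ) :
    (α : ℂ) * (Complex.exp (-(I * θ)) - 1) + 1 - β + lam * (Complex.exp (I * θ) - 1)
      = ((Real.cos θ - β : ℝ) : ℂ) + ((lam - α) * Real.sin θ : ℝ) * I := by
  have hsumC : (α : ℂ) + lam = 1 := by exact_mod_cast hsum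
  rw [Complex.exp_I_mul_ofReal, Complex.exp_neg_I_mul_ofReal]
  simp only [ofReal_sub, ofReal_mul]
  linear_combination (Real.cos θ - 1 : ℂ) * hsumC

lemma ampFactor_denominator_eq (θ : ℝ) :
    (1 : ℂ) - β * Complex.exp (-(I * θ))
      = ((1 - β * Real.cos θ : ℝ) : ℂ) + (β * Real.sin θ : ℝ) * I := by
  rw [Complex.exp_neg_I_mul_ofReal]
  simp only [ofReal_sub, ofReal_mul, ofReal_one]
  ring

lemma normSq_ampFactor_denominator_sub_numerator (hsum : α + lam = 1) (θ : ℝ) :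
    normSq ((1 : ℂ) - β * Complex.exp (-(I * θ)))
      - normSq ((α : ℂ) * (Complex.exp (-(I * θ)) - 1) + 1 - β
          + lam * (Complex.exp (I * θ) - 1))
      = 4 * (α * lam) * Real.sin θ ^ 2 := by
  rw [ampFactor_numerator_eq hsum, ampFactor_denominator_eq, normSq_add_mul_I,
    normSq_add_mul_I]
  obtain rfl : lam = 1 - α := by linarith
  linear_combination (β ^ 2 - 1) * Real.sin_sq_add_cos_sq θ

lemma norm_ampFactor_lt_one (hsum : α + lam = 1) (hαlam : 0 < α * lam) {θ : ℝ}
    (hθ : Real.sin θ ≠ 0) : ‖ampFactor α β lam θ‖ < 1 := by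
  have hgap := normSq_ampFactor_denominator_sub_numerator (β := β) hsum θ
  have hpos : 0 < 4 * (α * lam) * Real.sin θ ^ 2 :=
    mul_pos (mul_pos four_pos hαlam) (sq_pos_of_ne_zero hθ)
  rw [ampFactor, norm_div, div_lt_one (norm_pos_iff.mpr ?den), ← sq_lt_sq₀ (norm_nonneg _)
    (norm_nonneg _), Complex.sq_norm, Complex.sq_norm]
  · linarith
  · intro h
    rw [h, map_zero] at hgap
    linarith [normSq_nonneg ((α : ℂ) * (Complex.exp (-(I * θ)) - 1) + 1 - β
      + lam * (Complex.exp (I * θ) - 1))]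

end

theorem stmt_5_general (α β lam : ℝ) (hα : 0 < α) (hlam : 0 < lam)
    (hβ0 : 0 ≤ β) (hsum : α + lam = 1) :
    ampFactor α β lam Real.pi = -1 ∧
    ampFactor α β lam (-Real.pi) = -1 ∧
    (∀ θ ∈ Set.Ioo (-Real.pi) Real.pi, θ ≠ 0 →
      ‖ampFactor α β lam θ‖ < 1) := by
  have hβ : 1 + β ≠ 0 := by positivity
  refine ⟨ampFactor_of_exp_eq_neg_one hsum hβ ?_, ampFactor_of_exp_eq_neg_one hsum hβ ?_, ?_⟩
  · rw [mul_comm, exp_pi_mul_I]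
  · rw [ofReal_neg, mul_neg, mul_comm, Complex.exp_neg, exp_pi_mul_I, inv_neg, inv_one]
  · rintro θ ⟨hθlo, hθhi⟩ hθ
    refine norm_ampFactor_lt_one hsum (mul_pos hα hlam) fun hsin => hθ ?_
    exact (Real.sin_eq_zero_iff_of_lt_of_lt hθlo hθhi).mp hsin

theorem stmt_5 (α β lam : ℝ) (hα : 0 < α) (hlam : 0 < lam)
    (hβ0 : 0 ≤ β) (hβ1 : β < 1) (hsum : α + lam = 1) :
    ampFactor α β lam Real.pi = -1 ∧
    ampFactor α β lam (-Real.pi) = -1 ∧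
    (∀ θ ∈ Set.Ioo (-Real.pi) Real.pi, θ ≠ 0 →
      ‖ampFactor α β lam θ‖ < 1) :=
  stmt_5_general α β lam hα hlam hβ0 hsum
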